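/- Let M₁ ≥ f > M₂ ≥ 0 be real numbers, and let g₀ ∈ 𝒜(M₁,f,M₂) be given by g₀(t) = M₁ for 0 ≤ t ≤ c and g₀(t) = M₂ for c < t < 1, where c = (f − M₂)/(M₁ − M₂). If (gₙ) is a sequence in 𝒜(M₁,f,M₂) with limₙ I_{gₙ} = f + (f − M₂)·log((M₁ − M₂)/(f − M₂)), then gₙ → g₀ almost everywhere on [0,1), and also gₙ → g₀ in L¹([0,1)). -/

import Mathlib

/-!
For `g ∈ 𝒜(M₁, f, M₂)` the primitive `G(t) = ∫₀ᵗ g` is bounded by `M₁ t` and, since `g ≥ M₂`, by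
`f - M₂ (1 - t)`; the minimum `G₀` of the two is the primitive of `g₀`. As `I_g = ∫₀¹ G(t)/t dt`
and `∫₀¹ G₀(t)/t dt` is the given limit, the weighted deficiency `∫₀¹ (G₀ - Gₙ)(t)/t dt` tends
to `0`. Monotonicity turns this into pointwise control: for `t < c` the deficiency is at least
`(M₁ - g t)(s - t)` on `[t, c]`, and for `t > c` at least `(g t - M₂)(t - s)` on `[c, t]`, so
integrating over the half of the segment between `t` and `c` farther from `t` gives
`|g t - g₀ t| (t - c)² / 4 ≤ ∫₀¹ (G₀ - G)(t)/t dt`. Hence `gₙ → g₀` off `{c}`, and in `L¹` by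
bounded convergence.
-/

open MeasureTheory Filter Set

noncomputable section

/-- `g` belongs to the class `𝒜(M₁, f, M₂)`: `g : [0,1) → [0,∞)` is decreasing,
left continuous on `(0,1)`, continuous at `0`, with `g 0 = M₁`,
`lim_{t→1⁻} g t = M₂` and `∫₀¹ g = f`. -/
def memA (M₁ f M₂ : ℝ) (g : ℝ → ℝ) : Prop :=
  (∀ t ∈ Set.Ico (0 : ℝ) 1, 0 ≤ g t) ∧
  (∀ s ∈ Set.Ico (0 : ℝ) 1, ∀ t ∈ Set.Ico (0 : ℝ) 1, s ≤ t → g t ≤ g s) ∧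
  (∀ t ∈ Set.Ioo (0 : ℝ) 1, Filter.Tendsto g (nhdsWithin t (Set.Iio t)) (nhds (g t))) ∧
  Filter.Tendsto g (nhdsWithin 0 (Set.Ioi 0)) (nhds (g 0)) ∧
  g 0 = M₁ ∧
  Filter.Tendsto g (nhdsWithin 1 (Set.Iio 1)) (nhds M₂) ∧
  (∫ t in Set.Ioo (0 : ℝ) 1, g t) = f

/-- `I_g = ∫₀¹ ((1/t) ∫₀ᵗ g(u) du) dt`. -/
def Ig (g : ℝ → ℝ) : ℝ :=
  ∫ t in Set.Ioo (0 : ℝ) 1, (1 / t) * ∫ u in Set.Ioo (0 : ℝ) t, g u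

open Topology

section IooIntegral

variable {g : ℝ → ℝ} {s t r C : ℝ}

lemma setIntegral_Ioo_le_mul (hst : s ≤ t) (hg : IntegrableOn g (Ioo s t))
    (hC : ∀ u ∈ Ioo s t, g u ≤ C) : ∫ u in Ioo s t, g u ≤ C * (t - s) := by
  have := setIntegral_mono_on hg (integrableOn_const measure_Ioo_lt_top.ne) measurableSet_Ioo hC
  rwa [setIntegral_const, Real.volume_real_Ioo_of_le hst, smul_eq_mul, mul_comm] at this

lemma mul_le_setIntegral_Ioo (hst : s ≤ t) (hg : IntegrableOn g (Ioo s t))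
    (hC : ∀ u ∈ Ioo s t, C ≤ g u) : C * (t - s) ≤ ∫ u in Ioo s t, g u := by
  simpa [Real.volume_real_Ioo_of_le hst] using
    setIntegral_ge_of_const_le_real measurableSet_Ioo measure_Ioo_lt_top.ne hC hg

lemma setIntegral_Ioo_add (hst : s ≤ t) (htr : t ≤ r) (hg : IntegrableOn g (Ioo s r)) :
    ∫ u in Ioo s r, g u = (∫ u in Ioo s t, g u) + ∫ u in Ioo t r, g u := by
  have hg' : IntegrableOn g (Ioc s r) := hg.congr_set_ae Ioo_ae_eq_Ioc.symm
  simp only [← integral_Ioc_eq_integral_Ioo]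
  rw [← Ioc_union_Ioc_eq_Ioc hst htr, setIntegral_union (Ioc_disjoint_Ioc_of_le le_rfl)
    measurableSet_Ioc (hg'.mono_set (Ioc_subset_Ioc_right htr))
    (hg'.mono_set (Ioc_subset_Ioc_left hst))]

lemma mul_le_setIntegral_of_le_on {D : ℝ → ℝ} {S : Set ℝ} (hst : s ≤ t) (hsub : Ioo s t ⊆ S)
    (hS : MeasurableSet S) (hD : IntegrableOn D S) (hD0 : ∀ u ∈ S, 0 ≤ D u)
    (hC : ∀ u ∈ Ioo s t, C ≤ D u) : C * (t - s) ≤ ∫ u in S, D u :=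
  (mul_le_setIntegral_Ioo hst (hD.mono_set hsub) hC).trans <|
    setIntegral_mono_set hD (ae_restrict_of_forall_mem hS hD0) hsub.eventuallyLE

lemma integrableOn_one_div_mul_of_le_mul
    (hg : AEStronglyMeasurable g (volume.restrict (Ioo 0 1)))
    (hg0 : ∀ t ∈ Ioo (0 : ℝ) 1, 0 ≤ g t) (hgC : ∀ t ∈ Ioo (0 : ℝ) 1, g t ≤ C * t) :
    IntegrableOn (fun t => 1 / t * g t) (Ioo 0 1) := by
  refine Integrable.mono' (integrable_const C)
    (((measurable_const.div measurable_id).aestronglyMeasurable).mul hg) ?_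
  refine ae_restrict_of_forall_mem measurableSet_Ioo fun t ht => ?_
  rw [Real.norm_of_nonneg (mul_nonneg (one_div_pos.2 ht.1).le (hg0 t ht)), one_div_mul_eq_div,
    div_le_iff₀ ht.1]
  exact hgC t ht

end IooIntegral

lemma tendsto_of_abs_sub_mul_le {ι : Type*} {l : Filter ι} {u e : ι → ℝ} {a k : ℝ} (hk : 0 < k)
    (he : Tendsto e l (𝓝 0)) (h : ∀ i, |u i - a| * k ≤ e i) : Tendsto u l (𝓝 a) :=
  tendsto_iff_norm_sub_tendsto_zero.2 <| squeeze_zero (fun _ => norm_nonneg _)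
    (fun i => (le_div_iff₀ hk).2 (h i)) (by simpa using he.div_const k)

lemma tendsto_integral_abs_sub_of_ae_tendsto {α : Type*} [MeasurableSpace α] {μ : Measure α}
    [IsFiniteMeasure μ] {F : ℕ → α → ℝ} {F₀ : α → ℝ} {C : ℝ}
    (hF : ∀ n, AEStronglyMeasurable (F n) μ) (hF₀ : AEStronglyMeasurable F₀ μ)
    (hC : ∀ n, ∀ᵐ x ∂μ, |F n x - F₀ x| ≤ C)
    (hlim : ∀ᵐ x ∂μ, Tendsto (fun n => F n x) atTop (𝓝 (F₀ x))) :
    Tendsto (fun n => ∫ x, |F n x - F₀ x| ∂μ) atTop (𝓝 0) := by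
  simpa using tendsto_integral_of_dominated_convergence (F := fun n x => |F n x - F₀ x|)
    (f := 0) (fun _ => C) (fun n => ((hF n).sub hF₀).norm) (integrable_const C) (by simpa using hC)
    (hlim.mono fun x hx => by simpa using (hx.sub_const (F₀ x)).abs)

def extremalPrimitive (M₁ f M₂ t : ℝ) : ℝ := min (M₁ * t) (f - M₂ * (1 - t))

section extremalPrimitive

variable {M₁ f M₂ s : ℝ}

lemma extremalPrimitive_of_le (hM : M₂ < M₁) (hs : s ≤ (f - M₂) / (M₁ - M₂)) :
    extremalPrimitive M₁ f M₂ s = M₁ * s := by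
  rw [le_div_iff₀ (sub_pos.2 hM)] at hs
  exact min_eq_left (by linarith)

lemma extremalPrimitive_of_ge (hM : M₂ < M₁) (hs : (f - M₂) / (M₁ - M₂) ≤ s) :
    extremalPrimitive M₁ f M₂ s = f - M₂ * (1 - s) := by
  rw [div_le_iff₀ (sub_pos.2 hM)] at hs
  exact min_eq_right (by linarith)

lemma integrableOn_one_div_mul_extremalPrimitive (hM₂ : 0 ≤ M₂) (hf : M₂ < f) (hfM₁ : f ≤ M₁) :
    IntegrableOn (fun t => 1 / t * extremalPrimitive M₁ f M₂ t) (Ioo 0 1) :=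
  have hcont : Continuous (extremalPrimitive M₁ f M₂) := by unfold extremalPrimitive; fun_prop
  integrableOn_one_div_mul_of_le_mul hcont.aestronglyMeasurable
    (fun t ht => le_min (by nlinarith [ht.1]) (by nlinarith [ht.1, ht.2]))
    (fun _ _ => min_le_left _ _)

lemma integral_one_div_mul_extremalPrimitive (hM₂ : 0 ≤ M₂) (hf : M₂ < f) (hfM₁ : f ≤ M₁) :
    ∫ t in Ioo 0 1, 1 / t * extremalPrimitive M₁ f M₂ t =
      f + (f - M₂) * Real.log ((M₁ - M₂) / (f - M₂)) := by
  set c := (f - M₂) / (M₁ - M₂)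
  have hM : M₂ < M₁ := hf.trans_le hfM₁
  have hc0 : 0 < c := div_pos (sub_pos.2 hf) (sub_pos.2 hM)
  have hc1 : c ≤ 1 := div_le_one_of_le₀ (by linarith) (by linarith)
  have hcM : c * (M₁ - M₂) = f - M₂ := div_mul_cancel₀ _ (sub_pos.2 hM).ne'
  have hleft : ∫ t in Ioo 0 c, 1 / t * extremalPrimitive M₁ f M₂ t = M₁ * c := by
    rw [setIntegral_congr_fun measurableSet_Ioo (g := fun _ => M₁) fun t ht => ?_,
      setIntegral_const, Real.volume_real_Ioo_of_le hc0.le, smul_eq_mul, sub_zero, mul_comm]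
    rw [extremalPrimitive_of_le hM ht.2.le]
    field_simp [ht.1.ne']
  have hright : ∫ t in Ioo c 1, 1 / t * extremalPrimitive M₁ f M₂ t =
      (f - M₂) * Real.log (1 / c) + M₂ * (1 - c) := by
    have hinv : IntervalIntegrable (fun t : ℝ => (f - M₂) * t⁻¹) volume c 1 :=
      (intervalIntegral.intervalIntegrable_inv
        (fun x hx => ((uIcc_of_le hc1 ▸ hx).1.trans_lt' hc0).ne') continuousOn_id).const_mul _
    have heq : EqOn (fun t => 1 / t * extremalPrimitive M₁ f M₂ t)
        (fun t => (f - M₂) * t⁻¹ + M₂) (Ioo c 1) := fun t ht => by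
      simp only [extremalPrimitive_of_ge hM ht.1.le]
      field_simp [(hc0.trans ht.1).ne']
      ring
    rw [setIntegral_congr_fun measurableSet_Ioo heq, ← integral_Ioc_eq_integral_Ioo,
      ← intervalIntegral.integral_of_le hc1, intervalIntegral.integral_add hinv
      intervalIntegrable_const, intervalIntegral.integral_const_mul,
      integral_inv_of_pos hc0 one_pos, intervalIntegral.integral_const, smul_eq_mul, mul_comm M₂]
  rw [setIntegral_Ioo_add hc0.le hc1 (integrableOn_one_div_mul_extremalPrimitive hM₂ hf hfM₁),
    hleft, hright, one_div_div]
  linear_combination hcM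

end extremalPrimitive

def deficiency (M₁ f M₂ : ℝ) (g : ℝ → ℝ) (t : ℝ) : ℝ :=
  extremalPrimitive M₁ f M₂ t - ∫ u in Ioo 0 t, g u

namespace memA

variable {M₁ f M₂ : ℝ} {g : ℝ → ℝ} {s t : ℝ}

lemma nonneg (h : memA M₁ f M₂ g) (ht : t ∈ Ico 0 1) : 0 ≤ g t := h.1 t ht

lemma antitoneOn (h : memA M₁ f M₂ g) : AntitoneOn g (Ico 0 1) := h.2.1

lemma integral_eq (h : memA M₁ f M₂ g) : ∫ t in Ioo 0 1, g t = f := h.2.2.2.2.2.2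

lemma le_M₁ (h : memA M₁ f M₂ g) (ht : t ∈ Ico 0 1) : g t ≤ M₁ :=
  h.2.2.2.2.1 ▸ h.antitoneOn ⟨le_rfl, zero_lt_one⟩ ht ht.1

lemma M₂_le (h : memA M₁ f M₂ g) (ht : t ∈ Ico 0 1) : M₂ ≤ g t :=
  le_of_tendsto h.2.2.2.2.2.1 <| by
    filter_upwards [Ioo_mem_nhdsLT ht.2] with s hs
    exact h.antitoneOn ht ⟨ht.1.trans hs.1.le, hs.2⟩ hs.1.le

lemma M₂_nonneg (h : memA M₁ f M₂ g) : 0 ≤ M₂ :=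
  ge_of_tendsto h.2.2.2.2.2.1 <| by
    filter_upwards [Ioo_mem_nhdsLT zero_lt_one] with s hs
    exact h.nonneg ⟨hs.1.le, hs.2⟩

lemma integrableOn (h : memA M₁ f M₂ g) : IntegrableOn g (Ico 0 1) := by
  refine Integrable.mono' (integrable_const M₁)
    (aemeasurable_restrict_of_antitoneOn measurableSet_Ico h.antitoneOn).aestronglyMeasurable ?_
  refine ae_restrict_of_forall_mem measurableSet_Ico fun t ht => ?_
  rw [Real.norm_of_nonneg (h.nonneg ht)]
  exact h.le_M₁ ht

lemma integrableOn_Ioo (h : memA M₁ f M₂ g) (hs : 0 ≤ s) (ht : t ≤ 1) :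
    IntegrableOn g (Ioo s t) :=
  h.integrableOn.mono_set fun _ hu => ⟨hs.trans hu.1.le, hu.2.trans_le ht⟩

lemma integral_Ioo_le_mul (h : memA M₁ f M₂ g) (hs : 0 ≤ s) (hst : s ≤ t) (ht : t ≤ 1) :
    ∫ u in Ioo s t, g u ≤ g s * (t - s) :=
  setIntegral_Ioo_le_mul hst (h.integrableOn_Ioo hs ht) fun _ hu =>
    h.antitoneOn ⟨hs, hu.1.trans (hu.2.trans_le ht)⟩ ⟨hs.trans hu.1.le, hu.2.trans_le ht⟩ hu.1.le

lemma mul_le_integral_Ioo (h : memA M₁ f M₂ g) (hs : 0 ≤ s) (hst : s ≤ t) (ht : t < 1) :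
    g t * (t - s) ≤ ∫ u in Ioo s t, g u :=
  mul_le_setIntegral_Ioo hst (h.integrableOn_Ioo hs ht.le) fun _ hu =>
    h.antitoneOn ⟨hs.trans hu.1.le, hu.2.trans ht⟩ ⟨hs.trans hst, ht⟩ hu.2.le

lemma primitive_le_mul (h : memA M₁ f M₂ g) (ht : 0 ≤ t) (ht' : t ≤ 1) :
    ∫ u in Ioo 0 t, g u ≤ M₁ * t := by
  simpa using setIntegral_Ioo_le_mul ht (h.integrableOn_Ioo le_rfl ht') fun _ hu =>
    h.le_M₁ ⟨hu.1.le, hu.2.trans_le ht'⟩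

lemma mul_le_integral_Ioo_one (h : memA M₁ f M₂ g) (ht : 0 ≤ t) (ht' : t ≤ 1) :
    M₂ * (1 - t) ≤ ∫ u in Ioo t 1, g u :=
  mul_le_setIntegral_Ioo ht' (h.integrableOn_Ioo ht le_rfl) fun _ hu =>
    h.M₂_le ⟨ht.trans hu.1.le, hu.2⟩

lemma integral_Ioo_add (h : memA M₁ f M₂ g) (hs : 0 ≤ s) (hst : s ≤ t) {r : ℝ} (htr : t ≤ r)
    (hr : r ≤ 1) :
    ∫ u in Ioo s r, g u = (∫ u in Ioo s t, g u) + ∫ u in Ioo t r, g u :=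
  setIntegral_Ioo_add hst htr (h.integrableOn_Ioo hs hr)

lemma f_le_M₁ (h : memA M₁ f M₂ g) : f ≤ M₁ := by
  simpa [h.integral_eq] using h.primitive_le_mul zero_le_one le_rfl

lemma M₂_le_M₁ (h : memA M₁ f M₂ g) : M₂ ≤ M₁ :=
  (h.M₂_le ⟨le_rfl, one_pos⟩).trans (h.le_M₁ ⟨le_rfl, one_pos⟩)

lemma sub_div_sub_le_one (h : memA M₁ f M₂ g) : (f - M₂) / (M₁ - M₂) ≤ 1 :=
  div_le_one_of_le₀ (by linarith [h.f_le_M₁]) (sub_nonneg.2 h.M₂_le_M₁)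

lemma primitive_nonneg (h : memA M₁ f M₂ g) (ht : t ≤ 1) : 0 ≤ ∫ u in Ioo 0 t, g u :=
  setIntegral_nonneg measurableSet_Ioo fun _ hu => h.nonneg ⟨hu.1.le, hu.2.trans_le ht⟩

lemma monotoneOn_primitive (h : memA M₁ f M₂ g) :
    MonotoneOn (fun t => ∫ u in Ioo 0 t, g u) (Icc 0 1) := fun s hs t ht hst => by
  dsimp only
  rw [h.integral_Ioo_add le_rfl hs.1 hst ht.2]
  exact le_add_of_nonneg_right <| setIntegral_nonneg measurableSet_Ioo fun _ hu =>
    h.nonneg ⟨hs.1.trans hu.1.le, hu.2.trans_le ht.2⟩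

lemma primitive_le_extremalPrimitive (h : memA M₁ f M₂ g) (ht : 0 ≤ t) (ht' : t ≤ 1) :
    ∫ u in Ioo 0 t, g u ≤ extremalPrimitive M₁ f M₂ t := by
  refine le_min (h.primitive_le_mul ht ht') ?_
  have := h.integral_Ioo_add le_rfl ht ht' le_rfl
  linarith [h.integral_eq, h.mul_le_integral_Ioo_one ht ht']

lemma integrableOn_one_div_mul_primitive (h : memA M₁ f M₂ g) :
    IntegrableOn (fun t => 1 / t * ∫ u in Ioo 0 t, g u) (Ioo 0 1) :=
  integrableOn_one_div_mul_of_le_mul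
    (aemeasurable_restrict_of_monotoneOn measurableSet_Ioo
      (h.monotoneOn_primitive.mono Ioo_subset_Icc_self)).aestronglyMeasurable
    (fun _ ht => h.primitive_nonneg ht.2.le) (fun _ ht => h.primitive_le_mul ht.1.le ht.2.le)

lemma integral_deficiency_eq (h : memA M₁ f M₂ g) (hf : M₂ < f) :
    ∫ t in Ioo 0 1, 1 / t * deficiency M₁ f M₂ g t =
      f + (f - M₂) * Real.log ((M₁ - M₂) / (f - M₂)) - Ig g := by
  simp only [deficiency, mul_sub]
  rw [integral_sub (integrableOn_one_div_mul_extremalPrimitive h.M₂_nonneg hf h.f_le_M₁)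
    h.integrableOn_one_div_mul_primitive,
    integral_one_div_mul_extremalPrimitive h.M₂_nonneg hf h.f_le_M₁, Ig]

lemma integrableOn_deficiency (h : memA M₁ f M₂ g) (hf : M₂ < f) :
    IntegrableOn (fun t => 1 / t * deficiency M₁ f M₂ g t) (Ioo 0 1) := by
  simp only [deficiency, mul_sub]
  exact (integrableOn_one_div_mul_extremalPrimitive h.M₂_nonneg hf h.f_le_M₁).sub
    h.integrableOn_one_div_mul_primitive

lemma deficiency_nonneg (h : memA M₁ f M₂ g) (ht : 0 ≤ t) (ht' : t ≤ 1) :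
    0 ≤ deficiency M₁ f M₂ g t :=
  sub_nonneg.2 (h.primitive_le_extremalPrimitive ht ht')

lemma deficiency_le_one_div_mul (h : memA M₁ f M₂ g) (ht : t ∈ Ioo 0 1) :
    deficiency M₁ f M₂ g t ≤ 1 / t * deficiency M₁ f M₂ g t :=
  le_mul_of_one_le_left (h.deficiency_nonneg ht.1.le ht.2.le) (one_le_one_div ht.1 ht.2.le)

lemma one_div_mul_deficiency_nonneg (h : memA M₁ f M₂ g) (ht : t ∈ Ioo 0 1) :
    0 ≤ 1 / t * deficiency M₁ f M₂ g t :=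
  (h.deficiency_nonneg ht.1.le ht.2.le).trans (h.deficiency_le_one_div_mul ht)

lemma sub_mul_le_deficiency_of_le (h : memA M₁ f M₂ g) (hf : M₂ < f) (ht : 0 ≤ t) (hts : t ≤ s)
    (hs : s ≤ (f - M₂) / (M₁ - M₂)) :
    (M₁ - g t) * (s - t) ≤ deficiency M₁ f M₂ g s := by
  have hM : M₂ < M₁ := hf.trans_le h.f_le_M₁
  have hs1 : s ≤ 1 := hs.trans h.sub_div_sub_le_one
  rw [deficiency, extremalPrimitive_of_le hM hs, h.integral_Ioo_add le_rfl ht hts hs1]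
  linarith [h.primitive_le_mul ht (hts.trans hs1), h.integral_Ioo_le_mul ht hts hs1]

lemma sub_mul_le_deficiency_of_ge (h : memA M₁ f M₂ g) (hf : M₂ < f)
    (hs : (f - M₂) / (M₁ - M₂) ≤ s) (hst : s ≤ t) (ht : t < 1) :
    (g t - M₂) * (t - s) ≤ deficiency M₁ f M₂ g s := by
  have hM : M₂ < M₁ := hf.trans_le h.f_le_M₁
  have hs0 : 0 ≤ s := (div_pos (sub_pos.2 hf) (sub_pos.2 hM)).le.trans hs
  have h0s1 := h.integral_Ioo_add le_rfl hs0 (hst.trans ht.le) le_rfl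
  have hst1 := h.integral_Ioo_add hs0 hst ht.le le_rfl
  rw [deficiency, extremalPrimitive_of_ge hM hs]
  linarith [h.integral_eq, h.mul_le_integral_Ioo hs0 hst ht,
    h.mul_le_integral_Ioo_one (hs0.trans hst) ht.le]

lemma sub_mul_sq_le_of_lt (h : memA M₁ f M₂ g) (hf : M₂ < f) (ht : 0 ≤ t)
    (htc : t < (f - M₂) / (M₁ - M₂)) :
    (M₁ - g t) * ((t - (f - M₂) / (M₁ - M₂)) ^ 2 / 4) ≤
      f + (f - M₂) * Real.log ((M₁ - M₂) / (f - M₂)) - Ig g := by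
  set c := (f - M₂) / (M₁ - M₂)
  have hc1 : c ≤ 1 := h.sub_div_sub_le_one
  have hgt : 0 ≤ M₁ - g t := sub_nonneg.2 (h.le_M₁ ⟨ht, htc.trans_le hc1⟩)
  rw [← h.integral_deficiency_eq hf]
  calc (M₁ - g t) * ((t - c) ^ 2 / 4) = (M₁ - g t) * ((c - t) / 2) * (c - (t + c) / 2) := by ring
    _ ≤ _ := by
      refine mul_le_setIntegral_of_le_on (by linarith) (Ioo_subset_Ioo (by linarith) hc1)
        measurableSet_Ioo (h.integrableOn_deficiency hf)
        (fun _ hs => h.one_div_mul_deficiency_nonneg hs) fun s hs => ?_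
      calc (M₁ - g t) * ((c - t) / 2) ≤ (M₁ - g t) * (s - t) :=
            mul_le_mul_of_nonneg_left (by linarith [hs.1]) hgt
        _ ≤ _ := h.sub_mul_le_deficiency_of_le hf ht (by linarith [hs.1]) hs.2.le
        _ ≤ _ := h.deficiency_le_one_div_mul ⟨by linarith [hs.1], hs.2.trans_le hc1⟩

lemma sub_mul_sq_le_of_gt (h : memA M₁ f M₂ g) (hf : M₂ < f)
    (htc : (f - M₂) / (M₁ - M₂) < t) (ht : t < 1) :
    (g t - M₂) * ((t - (f - M₂) / (M₁ - M₂)) ^ 2 / 4) ≤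
      f + (f - M₂) * Real.log ((M₁ - M₂) / (f - M₂)) - Ig g := by
  set c := (f - M₂) / (M₁ - M₂)
  have hc0 : 0 < c := div_pos (sub_pos.2 hf) (sub_pos.2 (hf.trans_le h.f_le_M₁))
  have hgt : 0 ≤ g t - M₂ := sub_nonneg.2 (h.M₂_le ⟨hc0.le.trans htc.le, ht⟩)
  rw [← h.integral_deficiency_eq hf]
  calc (g t - M₂) * ((t - c) ^ 2 / 4) = (g t - M₂) * ((t - c) / 2) * ((c + t) / 2 - c) := by ring
    _ ≤ _ := by
      refine mul_le_setIntegral_of_le_on (by linarith) (Ioo_subset_Ioo hc0.le (by linarith))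
        measurableSet_Ioo (h.integrableOn_deficiency hf)
        (fun _ hs => h.one_div_mul_deficiency_nonneg hs) fun s hs => ?_
      calc (g t - M₂) * ((t - c) / 2) ≤ (g t - M₂) * (t - s) :=
            mul_le_mul_of_nonneg_left (by linarith [hs.2]) hgt
        _ ≤ _ := h.sub_mul_le_deficiency_of_ge hf hs.1.le (by linarith [hs.2]) ht
        _ ≤ _ := h.deficiency_le_one_div_mul ⟨hc0.trans hs.1, by linarith [hs.2]⟩

lemma abs_sub_mul_sq_le (h : memA M₁ f M₂ g) (hf : M₂ < f) (ht : t ∈ Ico 0 1)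
    (htc : t ≠ (f - M₂) / (M₁ - M₂)) :
    |g t - if t ≤ (f - M₂) / (M₁ - M₂) then M₁ else M₂| *
        ((t - (f - M₂) / (M₁ - M₂)) ^ 2 / 4) ≤
      f + (f - M₂) * Real.log ((M₁ - M₂) / (f - M₂)) - Ig g := by
  rcases htc.lt_or_gt with htc | htc
  · rw [if_pos htc.le, abs_sub_comm, abs_of_nonneg (sub_nonneg.2 (h.le_M₁ ht))]
    exact h.sub_mul_sq_le_of_lt hf ht.1 htc
  · rw [if_neg htc.not_ge, abs_of_nonneg (sub_nonneg.2 (h.M₂_le ht))]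
    exact h.sub_mul_sq_le_of_gt hf htc ht.2

lemma abs_sub_ite_le (h : memA M₁ f M₂ g) (ht : t ∈ Ico 0 1) :
    |g t - if t ≤ (f - M₂) / (M₁ - M₂) then M₁ else M₂| ≤ M₁ - M₂ := by
  rw [← Real.dist_eq]
  refine Real.dist_le_of_mem_Icc ⟨h.M₂_le ht, h.le_M₁ ht⟩ ?_
  split_ifs
  exacts [⟨h.M₂_le_M₁, le_rfl⟩, ⟨le_rfl, h.M₂_le_M₁⟩]

end memA

theorem stmt11_general (f M₁ M₂ : ℝ) (h2 : f > M₂)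
    (g : ℕ → ℝ → ℝ) (hg : ∀ n, memA M₁ f M₂ (g n))
    (hlim : Filter.Tendsto (fun n => Ig (g n)) Filter.atTop
      (nhds (f + (f - M₂) * Real.log ((M₁ - M₂) / (f - M₂))))) :
    (∀ᵐ t ∂(volume.restrict (Set.Ico (0 : ℝ) 1)),
      Filter.Tendsto (fun n => g n t) Filter.atTop
        (nhds (if t ≤ (f - M₂) / (M₁ - M₂) then M₁ else M₂))) ∧
    Filter.Tendsto
      (fun n => ∫ t in Set.Ico (0 : ℝ) 1,
        |g n t - if t ≤ (f - M₂) / (M₁ - M₂) then M₁ else M₂|)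
      Filter.atTop (nhds 0) := by
  set c := (f - M₂) / (M₁ - M₂)
  have hgap : Tendsto (fun n => f + (f - M₂) * Real.log ((M₁ - M₂) / (f - M₂)) - Ig (g n))
      atTop (𝓝 0) := by
    simpa using hlim.const_sub (f + (f - M₂) * Real.log ((M₁ - M₂) / (f - M₂)))
  have hae : ∀ᵐ t ∂(volume.restrict (Ico (0 : ℝ) 1)),
      Tendsto (fun n => g n t) atTop (𝓝 (if t ≤ c then M₁ else M₂)) := by
    filter_upwards [ae_restrict_mem measurableSet_Ico, ae_restrict_of_ae (volume.ae_ne c)]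
      with t ht htc
    have := sub_ne_zero.2 htc
    exact tendsto_of_abs_sub_mul_le (by positivity) hgap fun n =>
      (hg n).abs_sub_mul_sq_le h2 ht htc
  refine ⟨hae, tendsto_integral_abs_sub_of_ae_tendsto (C := M₁ - M₂) (fun n =>
    (aemeasurable_restrict_of_antitoneOn measurableSet_Ico (hg n).antitoneOn).aestronglyMeasurable)
    (Measurable.ite measurableSet_Iic measurable_const measurable_const).aestronglyMeasurable
    (fun n => ae_restrict_of_forall_mem measurableSet_Ico fun _ ht => (hg n).abs_sub_ite_le ht)
    hae⟩

theorem stmt11 (f M₁ M₂ : ℝ) (h1 : M₁ ≥ f) (h2 : f > M₂) (h3 : M₂ ≥ 0)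
    (g : ℕ → ℝ → ℝ) (hg : ∀ n, memA M₁ f M₂ (g n))
    (hlim : Filter.Tendsto (fun n => Ig (g n)) Filter.atTop
      (nhds (f + (f - M₂) * Real.log ((M₁ - M₂) / (f - M₂))))) :
    (∀ᵐ t ∂(volume.restrict (Set.Ico (0 : ℝ) 1)),
      Filter.Tendsto (fun n => g n t) Filter.atTop
        (nhds (if t ≤ (f - M₂) / (M₁ - M₂) then M₁ else M₂))) ∧
    Filter.Tendsto
      (fun n => ∫ t in Set.Ico (0 : ℝ) 1,
        |g n t - if t ≤ (f - M₂) / (M₁ - M₂) then M₁ else M₂|)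
      Filter.atTop (nhds 0) :=
  stmt11_general f M₁ M₂ h2 g hg hlim
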